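/- arXiv:1701.02162 — 7 statements merged into one kernel-verified Lean document; each statement's English description precedes it below -/
import Mathlib

section
/- Let A be the 2×2 real rotation matrix (1/5)·[[4,-3],[3,4]]. If v ∈ ℝ², v ≠ 0, then the set {Aⁿv : n ∈ ℕ} is infinite. -/
def ab : ℕ → ℤ × ℤ
  | 0 => (1, 0)
  | k+1 => (4 * (ab k).1 - 3 * (ab k).2, 3 * (ab k).1 + 4 * (ab k).2)

lemma pow_eq (k : ℕ) :
    (!![4, -3; 3, 4] : Matrix (Fin 2) (Fin 2) ℝ) ^ k =
      !![((ab k).1 : ℝ), -((ab k).2 : ℝ); ((ab k).2 : ℝ), ((ab k).1 : ℝ)] := by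
  induction k with
  | zero => simp [ab, Matrix.one_fin_two]
  | succ k ih =>
    rw [pow_succ, ih, ab]
    push_cast
    rw [Matrix.mul_fin_two]
    ring_nf

lemma mod5 (k : ℕ) : ((ab (k+1)).1 : ZMod 5) = 3 ^ k * 4 ∧ ((ab (k+1)).2 : ZMod 5) = 3 ^ k * 3 := by
  induction k with
  | zero => simp [ab]
  | succ k ih =>
    obtain ⟨h1, h2⟩ := ih
    constructor
    · show (((4 * (ab (k+1)).1 - 3 * (ab (k+1)).2 : ℤ)) : ZMod 5) = _
      push_cast
      rw [h1, h2]
      have h7 : (4*4 - 3*3 : ZMod 5) = 3*4 := by decide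
      linear_combination (3:ZMod 5)^k * h7
    · show (((3 * (ab (k+1)).1 + 4 * (ab (k+1)).2 : ℤ)) : ZMod 5) = _
      push_cast
      rw [h1, h2]
      have h7 : (3*4 + 4*3 : ZMod 5) = 3*3 := by decide
      linear_combination (3:ZMod 5)^k * h7

theorem stmt_2 (v : Fin 2 → ℝ) (hv : v ≠ 0) :
    let A : Matrix (Fin 2) (Fin 2) ℝ := !![4/5, -3/5; 3/5, 4/5]
    (Set.range fun n : ℕ => (A ^ n).mulVec v).Infinite := by
  intro A
  apply Set.infinite_range_of_injective
  have hA : A = (5 : ℝ)⁻¹ • !![4, -3; 3, 4] := by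
    show A = _
    norm_num [Matrix.smul_of, Matrix.smul_cons, A]
  have hApow : ∀ k : ℕ, A ^ k = ((5 : ℝ)⁻¹) ^ k •
      !![((ab k).1 : ℝ), -((ab k).2 : ℝ); ((ab k).2 : ℝ), ((ab k).1 : ℝ)] := by
    intro k
    rw [hA, smul_pow, pow_eq]
  have hdet : IsUnit A.det := by
    have : A.det = 1 := by
      show (!![4/5, -3/5; 3/5, 4/5] : Matrix (Fin 2) (Fin 2) ℝ).det = 1
      rw [Matrix.det_fin_two_of]; norm_num
    rw [this]; exact isUnit_one
  -- key: A^k v ≠ v for k ≥ 1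
  have key : ∀ k : ℕ, (A ^ (k+1)).mulVec v ≠ v := by
    intro k hk
    set a : ℝ := ((ab (k+1)).1 : ℝ)
    set b : ℝ := ((ab (k+1)).2 : ℝ)
    rw [hApow] at hk
    have h5 : (0:ℝ) < 5 ^ (k+1) := by positivity
    have h0 : (!![a, -b; b, a]).mulVec v = (5:ℝ)^(k+1) • v := by
      rw [Matrix.smul_mulVec] at hk
      have h0' := congrArg (HSMul.hSMul ((5:ℝ)^(k+1))) hk
      rwa [smul_smul, inv_pow, mul_inv_cancel₀ (ne_of_gt h5), one_smul] at h0'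
    have h1 : a * v 0 - b * v 1 = 5^(k+1) * v 0 := by
      have := congrFun h0 0
      simpa [Matrix.mulVec, dotProduct, Fin.sum_univ_two, sub_eq_add_neg] using this
    have h2 : b * v 0 + a * v 1 = 5^(k+1) * v 1 := by
      have := congrFun h0 1
      simpa [Matrix.mulVec, dotProduct, Fin.sum_univ_two] using this
    set α : ℝ := a - 5^(k+1)
    have e1 : α * v 0 - b * v 1 = 0 := by simp only [α]; linarith
    have e2 : b * v 0 + α * v 1 = 0 := by simp only [α]; linarith
    have hv0 : (α^2 + b^2) * v 0 = 0 := by linear_combination α * e1 + b * e2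
    have hv1 : (α^2 + b^2) * v 1 = 0 := by linear_combination (-b) * e1 + α * e2
    have hαb : α^2 + b^2 = 0 := by
      by_contra h
      apply hv
      funext i
      fin_cases i
      · exact (mul_eq_zero.1 hv0).resolve_left h
      · exact (mul_eq_zero.1 hv1).resolve_left h
    have hb : b = 0 := by nlinarith [sq_nonneg α, sq_nonneg b]
    have hbz : ((ab (k+1)).2 : ℤ) = 0 := by
      have hb' : ((ab (k+1)).2 : ℝ) = 0 := hb
      exact_mod_cast hb'
    have three_ne : (3 : ZMod 5) ≠ 0 := by decide
    have hm := (mod5 k).2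
    rw [hbz] at hm
    push_cast at hm
    haveI : Fact (Nat.Prime 5) := ⟨by norm_num⟩
    exact mul_ne_zero (pow_ne_zero k three_ne) three_ne hm.symm
  -- injectivity
  intro m n hmn
  by_contra hne
  wlog hlt : m < n generalizing m n
  · exact this hmn.symm (Ne.symm hne) (by omega)
  obtain ⟨k, rfl⟩ : ∃ k, n = m + (k + 1) := ⟨n - m - 1, by omega⟩
  apply key k
  have hinj : Function.Injective (A ^ m).mulVec :=
    Matrix.mulVec_injective_iff_isUnit.2 (((Matrix.isUnit_iff_isUnit_det A).2 hdet).pow m)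
  apply hinj
  rw [Matrix.mulVec_mulVec, ← pow_add]
  exact hmn.symm
end

section
/- Let A be the 4×4 real matrix (4/25)·[[4,-3,4,-3],[3,4,3,4],[0,0,4,-3],[0,0,3,4]] and let ε > 0. Then the set N_ε = {u ∈ ℝ⁴ : u₁² + u₂² ≤ ε² ∧ u₃² + u₄² ≤ ε²/16} satisfies A N_ε ⊆ N_ε. -/
theorem stmt_3 (ε : ℝ) (hε : 0 < ε) :
    let A : Matrix (Fin 4) (Fin 4) ℝ :=
      (4/25 : ℝ) • !![4, -3, 4, -3; 3, 4, 3, 4; 0, 0, 4, -3; 0, 0, 3, 4]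
    let N : Set (Fin 4 → ℝ) :=
      {u | u 0 ^ 2 + u 1 ^ 2 ≤ ε ^ 2 ∧ u 2 ^ 2 + u 3 ^ 2 ≤ ε ^ 2 / 16}
    A.mulVec '' N ⊆ N := by
  intro A N v hv
  obtain ⟨u, hu, rfl⟩ := hv
  obtain ⟨h1, h2⟩ := hu
  have he : (0:ℝ) < ε ^ 2 := by positivity
  constructor
  · simp only [A, Matrix.mulVec, dotProduct, Fin.sum_univ_four, Matrix.smul_apply,
      Matrix.cons_val', Matrix.cons_val_zero, Matrix.cons_val_one, Matrix.head_cons,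
      Matrix.empty_val', Matrix.cons_val_fin_one, Matrix.head_fin_const,
      Matrix.cons_val_two, Matrix.cons_val_three, Matrix.tail_cons, smul_eq_mul, Matrix.of_apply]
    norm_num
    nlinarith [sq_nonneg ((4*u 0 - 3*u 1)*(3*u 2 + 4*u 3) - (3*u 0 + 4*u 1)*(4*u 2 - 3*u 3)),
      sq_nonneg (u 0 + u 2), sq_nonneg (u 1 + u 3), mul_pos he he,
      mul_le_mul h1 h2 (by positivity) he.le, sq_nonneg ε,
      sq_nonneg ((4*u 0 - 3*u 1)*(4*u 2 - 3*u 3) + (3*u 0 + 4*u 1)*(3*u 2 + 4*u 3) - 25/4*ε^2)]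
  · simp only [A, Matrix.mulVec, dotProduct, Fin.sum_univ_four, Matrix.smul_apply,
      Matrix.cons_val', Matrix.cons_val_zero, Matrix.cons_val_one, Matrix.head_cons,
      Matrix.empty_val', Matrix.cons_val_fin_one, Matrix.head_fin_const,
      Matrix.cons_val_two, Matrix.cons_val_three, Matrix.tail_cons, smul_eq_mul, Matrix.of_apply]
    norm_num
    nlinarith [sq_nonneg (u 2), sq_nonneg (u 3)]
end

section
/- Let A be the 4×4 real matrix (1/5)·[[4,-3,4,-3],[3,4,3,4],[0,0,4,-3],[0,0,3,4]], and c > 0. Then the set Q = {u ∈ ℝ⁴ : u₁² + u₂² ≥ c ∧ u₁u₃ + u₂u₄ ≥ 0} satisfies AQ ⊆ Q, and moreover for every u ∈ Q, (Au)₁² + (Au)₂² ≥ u₁² + u₂². -/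
theorem stmt_4 (c : ℝ) (hc : 0 < c) :
    let A : Matrix (Fin 4) (Fin 4) ℝ :=
      (1/5 : ℝ) • !![4, -3, 4, -3; 3, 4, 3, 4; 0, 0, 4, -3; 0, 0, 3, 4]
    let Q : Set (Fin 4 → ℝ) :=
      {u | c ≤ u 0 ^ 2 + u 1 ^ 2 ∧ 0 ≤ u 0 * u 2 + u 1 * u 3}
    A.mulVec '' Q ⊆ Q ∧
      ∀ u ∈ Q, u 0 ^ 2 + u 1 ^ 2 ≤ (A.mulVec u 0) ^ 2 + (A.mulVec u 1) ^ 2 := by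
  intro A Q
  constructor
  · rintro v ⟨u, ⟨h1, h2⟩, rfl⟩
    simp only [A, Q, Matrix.mulVec, dotProduct, Fin.sum_univ_four, Matrix.smul_apply,
      smul_eq_mul, Set.mem_setOf_eq]
    norm_num [Matrix.cons_val_zero, Matrix.cons_val_one, Matrix.head_cons, Matrix.cons_val_two,
      Matrix.tail_cons, Matrix.cons_val_three, Matrix.vecHead, Matrix.vecTail]
    constructor <;> nlinarith [sq_nonneg (u 0), sq_nonneg (u 1), sq_nonneg (u 2), sq_nonneg (u 3)]
  · rintro u ⟨h1, h2⟩
    simp only [A, Matrix.mulVec, dotProduct, Fin.sum_univ_four, Matrix.smul_apply,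
      smul_eq_mul]
    norm_num [Matrix.cons_val_zero, Matrix.cons_val_one, Matrix.head_cons, Matrix.cons_val_two,
      Matrix.tail_cons, Matrix.cons_val_three, Matrix.vecHead, Matrix.vecTail]
    nlinarith [sq_nonneg (u 2), sq_nonneg (u 3)]
end

section
/- Let E, F ⊆ ℝⁿ be sets such that the closure of E equals the closure of F, E is nonempty, and F is semialgebraic. Then E ∩ F ≠ ∅. -/
/-- Semialgebraic subsets of ℝⁿ: Boolean combinations of sets defined by
polynomial inequalities with real coefficients. -/
inductive Semialgebraic {n : ℕ} : Set (Fin n → ℝ) → Prop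
  | basic (p : MvPolynomial (Fin n) ℝ) :
      Semialgebraic {x | 0 < MvPolynomial.eval x p}
  | compl {S : Set (Fin n → ℝ)} : Semialgebraic S → Semialgebraic Sᶜ
  | union {S T : Set (Fin n → ℝ)} :
      Semialgebraic S → Semialgebraic T → Semialgebraic (S ∪ T)

/-- Auxiliary: constructible sets (finite unions of locally closed sets). -/
inductive Ctb {X : Type*} [TopologicalSpace X] : Set X → Prop
  | loc {s : Set X} : IsLocallyClosed s → Ctb s
  | union {s t : Set X} : Ctb s → Ctb t → Ctb (s ∪ t)

lemma Ctb.inter {X : Type*} [TopologicalSpace X] {s t : Set X}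
    (hs : Ctb s) (ht : Ctb t) : Ctb (s ∩ t) := by
  induction hs generalizing t with
  | loc hs =>
    induction ht with
    | loc ht => exact Ctb.loc (hs.inter ht)
    | union h1 h2 ih1 ih2 =>
      rw [Set.inter_union_distrib_left]
      exact Ctb.union ih1 ih2
  | union h1 h2 ih1 ih2 =>
    rw [Set.union_inter_distrib_right]
    exact Ctb.union (ih1 ht) (ih2 ht)

lemma Ctb.compl {X : Type*} [TopologicalSpace X] {s : Set X}
    (hs : Ctb s) : Ctb sᶜ := by
  induction hs with
  | loc hs =>
    obtain ⟨U, Z, hU, hZ, rfl⟩ := hs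
    rw [Set.compl_inter]
    exact Ctb.union (Ctb.loc hU.isClosed_compl.isLocallyClosed)
      (Ctb.loc hZ.isOpen_compl.isLocallyClosed)
  | union h1 h2 ih1 ih2 =>
    rw [Set.compl_union]
    exact ih1.inter ih2

lemma Semialgebraic.ctb {n : ℕ} {F : Set (Fin n → ℝ)} (hF : Semialgebraic F) :
    Ctb F := by
  induction hF with
  | basic p =>
    exact Ctb.loc (IsOpen.isLocallyClosed
      (isOpen_lt continuous_const (MvPolynomial.continuous_eval p)))
  | compl _ ih => exact ih.compl
  | union _ _ ih1 ih2 => exact Ctb.union ih1 ih2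

lemma Ctb.exists_decomp {X : Type*} [TopologicalSpace X] {F : Set X}
    (hF : Ctb F) : ∃ S : Set (Set X), S.Finite ∧ (∀ t ∈ S, IsLocallyClosed t)
      ∧ F = ⋃₀ S := by
  induction hF with
  | loc hs =>
    exact ⟨{_}, Set.finite_singleton _, by simpa using hs, by simp⟩
  | union h1 h2 ih1 ih2 =>
    obtain ⟨S, hSf, hSl, rfl⟩ := ih1
    obtain ⟨T, hTf, hTl, rfl⟩ := ih2
    refine ⟨S ∪ T, hSf.union hTf, ?_, by rw [Set.sUnion_union]⟩
    rintro t (ht | ht)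
    exacts [hSl t ht, hTl t ht]

lemma IsLocallyClosed.isClosed_sdiff {X : Type*} [TopologicalSpace X]
    {s : Set X} (hs : IsLocallyClosed s) : IsClosed (closure s \ s) := by
  have := hs.isOpen_coborder
  rw [coborder] at this
  simpa using this.isClosed_compl

theorem stmt_5 {n : ℕ} (E F : Set (Fin n → ℝ))
    (hEF : closure E = closure F) (hE : E.Nonempty) (hF : Semialgebraic F) :
    (E ∩ F).Nonempty := by
  by_contra hcon
  rw [Set.not_nonempty_iff_eq_empty] at hcon
  obtain ⟨S, hSf, hSl, hFS⟩ := hF.ctb.exists_decomp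
  -- the "bad" set
  set K : Set (Fin n → ℝ) := ⋃ t ∈ S, (closure t \ t) with hK
  have hKclosed : IsClosed K :=
    hSf.isClosed_biUnion fun t ht => (hSl t ht).isClosed_sdiff
  have hclF : closure F = ⋃ t ∈ S, closure t := by
    rw [hFS, Set.sUnion_eq_biUnion, hSf.closure_biUnion]
  -- E ⊆ closure F \ F ⊆ K
  have hEK : E ⊆ K := by
    intro x hx
    have hxF : x ∈ closure F := hEF ▸ subset_closure hx
    have hxnF : x ∉ F := fun h =>
      Set.eq_empty_iff_forall_notMem.mp hcon x ⟨hx, h⟩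
    rw [hclF] at hxF
    obtain ⟨t, ht, hxt⟩ := Set.mem_iUnion₂.mp hxF
    exact Set.mem_biUnion ht ⟨hxt, fun h => hxnF (hFS ▸ Set.mem_sUnion.mpr ⟨t, ht, h⟩)⟩
  have hclFK : closure F ⊆ K := by
    rw [← hEF]
    exact closure_minimal hEK hKclosed
  -- Baire category on the closed set `closure F`
  have hclosed : IsClosed (closure F : Set (Fin n → ℝ)) := isClosed_closure
  haveI : CompleteSpace (closure F : Set (Fin n → ℝ)) := hclosed.completeSpace_coe
  haveI : Nonempty (closure F : Set (Fin n → ℝ)) := by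
    obtain ⟨x, hx⟩ := hE
    exact ⟨⟨x, hEF ▸ subset_closure hx⟩⟩
  haveI : Finite S := hSf.to_subtype
  have hcover : ⋃ t : S, (Subtype.val ⁻¹' (closure t.1 \ t.1) :
      Set (closure F : Set (Fin n → ℝ))) = Set.univ := by
    ext x
    simp only [Set.mem_iUnion, Set.mem_univ, iff_true, Set.mem_preimage]
    have := hclFK x.2
    rw [hK] at this
    obtain ⟨t, ht, hxt⟩ := Set.mem_iUnion₂.mp this
    exact ⟨⟨t, ht⟩, hxt⟩
  obtain ⟨t, x, hxint⟩ := nonempty_interior_of_iUnion_of_closed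
    (fun t : S => ((hSl t.1 t.2).isClosed_sdiff).preimage continuous_subtype_val) hcover
  -- translate the interior statement back to ℝⁿ
  obtain ⟨W, hWopen, hWeq⟩ := isOpen_induced_iff.mp
    (isOpen_interior (s := (Subtype.val ⁻¹' (closure t.1 \ t.1) :
      Set (closure F : Set (Fin n → ℝ)))))
  have hxW : (x : Fin n → ℝ) ∈ W := by
    have : x ∈ Subtype.val ⁻¹' W := hWeq ▸ hxint
    exact this
  have hxcl : (x : Fin n → ℝ) ∈ closure t.1 :=
    (interior_subset hxint).1
  -- W is an open neighborhood of x ∈ closure t, so W meets t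
  obtain ⟨y, hyW, hyt⟩ := mem_closure_iff.mp hxcl W hWopen hxW
  have hyclF : y ∈ closure F := by
    rw [hclF]
    exact Set.mem_biUnion t.2 (subset_closure hyt)
  have : (⟨y, hyclF⟩ : (closure F : Set (Fin n → ℝ))) ∈ interior
      (Subtype.val ⁻¹' (closure t.1 \ t.1)) := by
    rw [← hWeq]
    exact hyW
  exact (interior_subset this).2 hyt
end

section
/- Let λ ∈ ℂ with |λ| = 1 and c > 0. Define P = {(z₁, z₂) ∈ ℂ² : |z₁| ≥ c ∧ ⟨λz₁, z₂⟩ ≥ 0}, where ⟨u,v⟩ = Re(u · conj(v)). Let J be the 2×2 Jordan block with eigenvalue λ, so J(z₁,z₂) = (λz₁ + z₂, λz₂). Then JP ⊆ P. -/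
open ComplexConjugate

namespace Complex

theorem norm_le_norm_add_of_re_mul_conj_nonneg {x y : ℂ} (h : 0 ≤ (x * conj y).re) :
    ‖x‖ ≤ ‖x + y‖ := by
  rw [← sq_le_sq₀ (norm_nonneg _) (norm_nonneg _), Complex.sq_norm, Complex.sq_norm, normSq_add]
  linarith [normSq_nonneg y]

theorem mul_mul_conj_mul_of_norm_eq_one {l : ℂ} (hl : ‖l‖ = 1) (u v : ℂ) :
    l * u * conj (l * v) = u * conj v := by
  have hll : l * conj l = 1 := by
    rw [mul_conj, normSq_eq_norm_sq, hl]
    norm_num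
  rw [map_mul]
  linear_combination u * conj v * hll

theorem re_add_mul_conj (x y : ℂ) : ((x + y) * conj y).re = (x * conj y).re + normSq y := by
  rw [add_mul, mul_conj, add_re, ofReal_re]

end Complex

open Complex in
theorem stmt_10_general (l : ℂ) (hl : ‖l‖ = 1) (c : ℝ)
    (P : Set (ℂ × ℂ))
    (hP : P = {z | c ≤ ‖z.1‖ ∧ 0 ≤ (l * z.1 * starRingEnd ℂ z.2).re}) :
    ∀ z ∈ P, (l * z.1 + z.2, l * z.2) ∈ P := by
  subst hP
  rintro ⟨z₁, z₂⟩ ⟨hnorm, hre⟩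
  refine ⟨?_, ?_⟩
  · calc c ≤ ‖z₁‖ := hnorm
      _ = ‖l * z₁‖ := by rw [norm_mul, hl, one_mul]
      _ ≤ ‖l * z₁ + z₂‖ := norm_le_norm_add_of_re_mul_conj_nonneg hre
  · show 0 ≤ (l * (l * z₁ + z₂) * conj (l * z₂)).re
    rw [mul_mul_conj_mul_of_norm_eq_one hl, re_add_mul_conj]
    exact add_nonneg hre (normSq_nonneg z₂)

theorem stmt_10 (l : ℂ) (hl : ‖l‖ = 1) (c : ℝ) (hc : 0 < c)
    (P : Set (ℂ × ℂ))
    (hP : P = {z | c ≤ ‖z.1‖ ∧ 0 ≤ (l * z.1 * starRingEnd ℂ z.2).re}) :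
    ∀ z ∈ P, (l * z.1 + z.2, l * z.2) ∈ P :=
  stmt_10_general l hl c P hP
end

section
/- Let A = diag(λ₁,…,λ_d) with all |λᵢ| = 1, x, y ∈ ℂ^d, and suppose {Aⁿ : n ∈ ℕ} is dense in the group T_A (as above). If P ⊆ ℂ^d is semialgebraic (viewing ℂ^d as ℝ^{2d}), AP ⊆ P, x ∈ P, and y ∉ P, then the closure of the orbit {Aⁿx : n ∈ ℕ} is contained in P, and in particular y is not in the closure of the orbit. -/
/-!
The closure `H` of `{gⁿ : n ∈ ℕ}` in the compact torus `G = (S¹)^d` is a subgroup, and it is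
also the closure of `{g⁻ⁿ : n ∈ ℕ}`. Hence the orbit closure `K` of `x` is `H • x`, and for every
`z ∈ K` the backward orbit `{g⁻ⁿ • z}` is dense in `H • z = K`. The set `P ∩ K` is dense in `K`,
and, being semialgebraic, it contains a nonempty relatively open subset of `K`; the backward orbit
of `z` must enter it, so `g⁻ⁿ • z ∈ P` for some `n`, and `z = gⁿ • g⁻ⁿ • z ∈ P` by invariance.
-/

open Set

/-- Semialgebraic subsets of ℂ^d, viewed as ℝ^{2d}: Boolean combinations of
sets defined by polynomial inequalities in the real and imaginary parts. -/
inductive SemialgebraicC {d : ℕ} : Set (Fin d → ℂ) → Prop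
  | basic (p : MvPolynomial (Fin d ⊕ Fin d) ℝ) :
      SemialgebraicC {z | 0 < MvPolynomial.eval
        (Sum.elim (fun i => (z i).re) (fun i => (z i).im)) p}
  | compl {S : Set (Fin d → ℂ)} : SemialgebraicC S → SemialgebraicC Sᶜ
  | union {S T : Set (Fin d → ℂ)} :
      SemialgebraicC S → SemialgebraicC T → SemialgebraicC (S ∪ T)

section Resolvable

variable {X : Type*} [TopologicalSpace X]

/-- Hausdorff's resolvable sets, tested on arbitrary rather than closed subsets `C`. They form a
Boolean algebra containing the open sets. -/
def IsResolvable (F : Set X) : Prop :=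
  ∀ C : Set X, C.Nonempty → ∃ U, IsOpen U ∧ (U ∩ C).Nonempty ∧ (U ∩ C ⊆ F ∨ U ∩ C ⊆ Fᶜ)

theorem IsOpen.isResolvable {F : Set X} (hF : IsOpen F) : IsResolvable F := by
  intro C hC
  by_cases hFC : (F ∩ C).Nonempty
  · exact ⟨F, hF, hFC, Or.inl inter_subset_left⟩
  · refine ⟨univ, isOpen_univ, by rwa [univ_inter], Or.inr fun c hc hcF => hFC ?_⟩
    exact ⟨c, hcF, hc.2⟩

theorem IsResolvable.compl {F : Set X} (hF : IsResolvable F) : IsResolvable Fᶜ := by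
  intro C hC
  obtain ⟨U, hU, hUC, hsub⟩ := hF C hC
  exact ⟨U, hU, hUC, by rwa [compl_compl, or_comm]⟩

theorem IsClosed.isResolvable {F : Set X} (hF : IsClosed F) : IsResolvable F := by
  simpa only [compl_compl] using hF.isOpen_compl.isResolvable.compl

theorem IsResolvable.union {F F' : Set X} (hF : IsResolvable F) (hF' : IsResolvable F') :
    IsResolvable (F ∪ F') := by
  intro C hC
  obtain ⟨U, hU, hUC, hsub | hsub⟩ := hF C hC
  · exact ⟨U, hU, hUC, Or.inl (hsub.trans subset_union_left)⟩
  obtain ⟨V, hV, hVUC, hsub' | hsub'⟩ := hF' (U ∩ C) hUC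
  all_goals refine ⟨V ∩ U, hV.inter hU, by rwa [inter_assoc], ?_⟩
  · exact Or.inl (fun c hc => Or.inr (hsub' ⟨hc.1.1, hc.1.2, hc.2⟩))
  · rw [compl_union]
    exact Or.inr fun c hc => ⟨hsub ⟨hc.1.2, hc.2⟩, hsub' ⟨hc.1.1, hc.1.2, hc.2⟩⟩

theorem IsResolvable.inter {F F' : Set X} (hF : IsResolvable F) (hF' : IsResolvable F') :
    IsResolvable (F ∩ F') := by
  simpa only [compl_union, compl_compl] using (hF.compl.union hF'.compl).compl

/-- `F` contains a nonempty relatively open subset of its closure, which `E` has to meet. -/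
theorem IsResolvable.inter_nonempty_of_closure_eq {F E : Set X} (hF : IsResolvable F)
    (hne : F.Nonempty) (hE : closure E = closure F) : (E ∩ F).Nonempty := by
  obtain ⟨U, hU, hUF, hsub⟩ := hF (closure F) (hne.mono subset_closure)
  have hUF' : (U ∩ F).Nonempty := by
    obtain ⟨w, hwU, hwF⟩ := hUF
    exact mem_closure_iff.mp hwF U hU hwU
  have hsubF : U ∩ closure F ⊆ F := hsub.resolve_right fun h => by
    obtain ⟨w, hwU, hwF⟩ := hUF'
    exact h ⟨hwU, subset_closure hwF⟩ hwF
  obtain ⟨w, hwU, hwE⟩ := hUF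
  rw [← hE] at hwE
  obtain ⟨e, heU, heE⟩ := mem_closure_iff.mp hwE U hU hwU
  exact ⟨e, heE, hsubF ⟨heU, hE ▸ subset_closure heE⟩⟩

end Resolvable

theorem SemialgebraicC.isResolvable {d : ℕ} {P : Set (Fin d → ℂ)} (h : SemialgebraicC P) :
    IsResolvable P := by
  induction h with
  | basic p =>
    refine (isOpen_lt continuous_const ((MvPolynomial.continuous_eval p).comp ?_)).isResolvable
    refine continuous_pi fun j => ?_
    cases j with
    | inl i => exact Complex.continuous_re.comp (continuous_apply i)
    | inr i => exact Complex.continuous_im.comp (continuous_apply i)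
  | compl _ ih => exact ih.compl
  | union _ _ ih ih' => exact ih.union ih'

section CompactGroupAction

variable {G X : Type*} [Group G] [TopologicalSpace G] [IsTopologicalGroup G] [CompactSpace G]
  [TopologicalSpace X] [T2Space X] [MulAction G X] [ContinuousSMul G X]

theorem closure_range_pow_smul (g : G) (x : X) :
    closure (range fun n : ℕ => g ^ n • x) =
      MulAction.orbit (Subgroup.zpowers g).topologicalClosure x := by
  have hact : Continuous fun h : G => h • x := continuous_id.smul continuous_const
  have hrange : (range fun n : ℕ => g ^ n • x) = (· • x) '' range (g ^ · : ℕ → G) := by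
    rw [← range_comp]; rfl
  rw [hrange, hact.isClosedMap.closure_image_eq_of_continuous hact, ← closure_range_zpow_eq_pow,
    ← Subgroup.coe_zpowers]
  ext y
  simp only [mem_image, MulAction.mem_orbit_iff, Subtype.exists, Subgroup.smul_def,
    ← Subgroup.topologicalClosure_coe, SetLike.mem_coe, exists_prop]

theorem closure_range_pow_smul_subset {g : G} {P : Set X} (hP : IsResolvable P)
    (hgP : MapsTo (g • ·) P P) {x : X} (hx : x ∈ P) :
    closure (range fun n : ℕ => g ^ n • x) ⊆ P := by
  set K := closure (range fun n : ℕ => g ^ n • x)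
  have hpowP : ∀ n : ℕ, ∀ p ∈ P, g ^ n • p ∈ P := fun n p hp => by
    simpa only [smul_iterate] using hgP.iterate n hp
  intro z hz
  have hzK : z ∈ MulAction.orbit (Subgroup.zpowers g).topologicalClosure x := by
    rwa [← closure_range_pow_smul]
  have hback : closure (range fun n : ℕ => g⁻¹ ^ n • z) = K := by
    rw [closure_range_pow_smul, Subgroup.zpowers_inv, MulAction.orbit_eq_iff.mpr hzK,
      ← closure_range_pow_smul]
  have hclosure : closure (P ∩ K) = K := by
    refine (closure_minimal inter_subset_right isClosed_closure).antisymm (closure_mono ?_)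
    rintro _ ⟨n, rfl⟩
    exact ⟨hpowP n x hx, subset_closure ⟨n, rfl⟩⟩
  have hne : (P ∩ K).Nonempty := ⟨x, hx, subset_closure ⟨0, by simp⟩⟩
  obtain ⟨_, ⟨n, rfl⟩, hnP, -⟩ := (hP.inter isClosed_closure.isResolvable)
    |>.inter_nonempty_of_closure_eq hne (hback.trans hclosure.symm)
  simpa only [inv_pow, smul_inv_smul] using hpowP n _ hnP

end CompactGroupAction

theorem stmt_17_general {d : ℕ} (l : Fin d → ℂ) (hl : ∀ i, ‖l i‖ = 1)
    (A : Matrix (Fin d) (Fin d) ℂ) (hA : A = Matrix.diagonal l)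
    (x y : Fin d → ℂ) (P : Set (Fin d → ℂ)) (hPsa : SemialgebraicC P)
    (hstab : A.mulVec '' P ⊆ P) (hx : x ∈ P) (hy : y ∉ P) :
    closure (Set.range fun n : ℕ => (A ^ n).mulVec x) ⊆ P ∧
      y ∉ closure (Set.range fun n : ℕ => (A ^ n).mulVec x) := by
  let g : Fin d → Circle := fun i => ⟨l i, mem_sphere_zero_iff_norm.2 (hl i)⟩
  have hpow : ∀ (n : ℕ) (v : Fin d → ℂ), (A ^ n).mulVec v = g ^ n • v := fun n v => by
    ext i
    rw [hA, Matrix.diagonal_pow, Matrix.mulVec_diagonal, Pi.smul_apply', Circle.smul_def,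
      Pi.pow_apply, Pi.pow_apply, Circle.coe_pow, smul_eq_mul]
  have hgP : MapsTo (g • ·) P P := by
    have hA1 : A.mulVec = (g • ·) := funext fun v => by simpa only [pow_one] using hpow 1 v
    rwa [mapsTo_iff_image_subset, ← hA1]
  have hsub : closure (Set.range fun n : ℕ => (A ^ n).mulVec x) ⊆ P := by
    simpa only [hpow] using closure_range_pow_smul_subset hPsa.isResolvable hgP hx
  exact ⟨hsub, fun h => hy (hsub h)⟩

theorem stmt_17 {d : ℕ} (l : Fin d → ℂ) (hl : ∀ i, ‖l i‖ = 1)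
    (A : Matrix (Fin d) (Fin d) ℂ) (hA : A = Matrix.diagonal l)
    (T : Set (Matrix (Fin d) (Fin d) ℂ))
    (hT : T = {M | ∃ μ : Fin d → ℂ, M = Matrix.diagonal μ ∧
      (∀ i, ‖μ i‖ = 1) ∧
      ∀ v : Fin d → ℤ, (∏ i, l i ^ v i = 1) → ∏ i, μ i ^ v i = 1})
    (hdense : closure (Set.range fun n : ℕ => A ^ n) = T)
    (x y : Fin d → ℂ) (P : Set (Fin d → ℂ)) (hPsa : SemialgebraicC P)
    (hstab : A.mulVec '' P ⊆ P) (hx : x ∈ P) (hy : y ∉ P) :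
    closure (Set.range fun n : ℕ => (A ^ n).mulVec x) ⊆ P ∧
      y ∉ closure (Set.range fun n : ℕ => (A ^ n).mulVec x) :=
  stmt_17_general l hl A hA x y P hPsa hstab hx hy
end

section
/- Let A be a d×d complex matrix in Jordan form containing a nilpotent Jordan block (eigenvalue 0) spanning a set of coordinates J, and let x, y ∈ ℂ^d with y_J ≠ 0 and y ∉ {Aⁿx : n ∈ ℕ}. Then P = {x, Ax, …, A^{d−1}x} ∪ {z ∈ ℂ^d : z_J = 0} satisfies AP ⊆ P, x ∈ P, and y ∉ P. -/
theorem stmt_18 {d : ℕ} (hd : 0 < d) (A : Matrix (Fin d) (Fin d) ℂ)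
    (J : Set (Fin d)) (hJne : J.Nonempty)
    -- the coordinates in J span a nilpotent (eigenvalue 0) Jordan block:
    -- the subspace {z | z_J = 0} is invariant under A, and A^d kills the J-coordinates
    (hInv : ∀ z : Fin d → ℂ, (∀ i ∈ J, z i = 0) → ∀ i ∈ J, A.mulVec z i = 0)
    (hNil : ∀ z : Fin d → ℂ, ∀ i ∈ J, (A ^ d).mulVec z i = 0)
    (x y : Fin d → ℂ) (hy : ∃ i ∈ J, y i ≠ 0)
    (hreach : ∀ n : ℕ, (A ^ n).mulVec x ≠ y)
    (P : Set (Fin d → ℂ))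
    (hP : P = {z | ∃ n < d, z = (A ^ n).mulVec x} ∪ {z | ∀ i ∈ J, z i = 0}) :
    A.mulVec '' P ⊆ P ∧ x ∈ P ∧ y ∉ P := by
  subst hP
  refine ⟨?_, ?_, ?_⟩
  · rintro w ⟨z, hz, rfl⟩
    rcases hz with ⟨n, hn, rfl⟩ | hz
    · have he : A.mulVec ((A ^ n).mulVec x) = (A ^ (n + 1)).mulVec x := by
        rw [Matrix.mulVec_mulVec, ← pow_succ']
      rw [he]
      rcases lt_or_eq_of_le (Nat.succ_le_of_lt hn) with h | h
      · exact Or.inl ⟨n + 1, h, rfl⟩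
      · exact Or.inr fun i hi => h ▸ hNil x i hi
    · exact Or.inr (hInv z hz)
  · exact Or.inl ⟨0, hd, by simp [Matrix.one_mulVec]⟩
  · rintro (⟨n, _, rfl⟩ | h)
    · exact hreach n rfl
    · obtain ⟨i, hi, hyi⟩ := hy
      exact hyi (h i hi)
end
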